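/- Let K = ∏ᵢ F_{qᵢ} and F = ∏ᵢ F_{pᵢ} be products of finite fields with |K| and |F| coprime. Then the map sending an (F, K)-linearly closed clonoid to its unary part is a lattice isomorphism from the lattice of all (F, K)-linearly closed clonoids onto the direct product over i of the lattices of F_{pᵢ}[K^×]-submodules of F_{pᵢ}^K. -/

import Mathlib

/-- `C` is an `(F, K)`-linearly closed clonoid: a nonempty set of finitary functions
`∏ᵢ Kᵢⁿ → F` closed under `F`-linear combinations and under precomposition with tuples
of `Kᵢ`-linear maps (given by matrices). -/
def IsLCC {m : ℕ} (K : Fin m → Type*) [∀ i, Field (K i)] (F : Type*) [CommRing F]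
    (C : ∀ n : ℕ, Set ((∀ i, Fin n → K i) → F)) : Prop :=
  (∃ n, (C n).Nonempty) ∧
  (∀ (n : ℕ) (a b : F) (f g : (∀ i, Fin n → K i) → F), f ∈ C n → g ∈ C n →
    (fun x => a * f x + b * g x) ∈ C n) ∧
  (∀ (n l : ℕ) (f : (∀ i, Fin n → K i) → F), f ∈ C n →
    ∀ A : ∀ i, Matrix (Fin n) (Fin l) (K i),
      (fun x : ∀ i, Fin l → K i => f (fun i => (A i).mulVec (x i))) ∈ C l)

/-- The `(F, K)`-linearly closed clonoid generated by a set `S` of unary functions. -/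
def ClgU {m : ℕ} (K : Fin m → Type*) [∀ i, Field (K i)] (F : Type*) [CommRing F]
    (S : Set ((∀ i, Fin 1 → K i) → F)) : ∀ n : ℕ, Set ((∀ i, Fin n → K i) → F) :=
  fun n => {f | ∀ C, IsLCC K F C → S ⊆ C 1 → f ∈ C n}

/-- `V` is an `F_p[K^×]`-submodule of `F_p^K`: nonempty, closed under `F_p`-linear
combinations, and closed under scaling of the arguments by elements of the
multiplicative monoid `K^×`. -/
def IsSubmoduleKx {m : ℕ} (K : Fin m → Type*) [∀ i, Field (K i)]
    (Fp : Type*) [Field Fp] (V : Set ((∀ i, Fin 1 → K i) → Fp)) : Prop :=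
  V.Nonempty ∧
  (∀ (a b : Fp) (f g : (∀ i, Fin 1 → K i) → Fp), f ∈ V → g ∈ V →
    (fun x => a * f x + b * g x) ∈ V) ∧
  (∀ f ∈ V, ∀ c : ∀ i, K i,
    (fun x : ∀ i, Fin 1 → K i => f (fun i j => c i * x i j)) ∈ V)

/-!
Over a finite field `k` with `q` elements, fix one nonzero vector `d` on each line through `0`.
For `x, z ∈ kⁿ` one has
`q ^ (n - 1) * [x = z] = q ^ (n - 1) * [0 = z] + ∑_d ∑_a g (a ⬝ d) * [(a ⬝ x) • d = z]`
with `g t = [t = 1] - [t = 0]`. Indeed, if `x = c • d` the inner sum over `a` is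
`q ^ (n - 1) * ([x = z] - [0 = z])`, and a nonzero `x` lies on exactly one of the lines;
otherwise there is `b` with `b ⬝ x = 0` and `b ⬝ d = 1`, and averaging over the shifts
`a ↦ a + r • b` kills the inner sum because `∑ g = 0`.
Hence `q ^ (n - 1) • f` is an integer combination of the functions `x ↦ f ((a ⬝ x) • d)`, each
of which is the unary function `f (· • d)` after the linear form `a`.
Taking products over the factors `Kᵢ` and inverting `|K|` in `F`, a linearly closed clonoid is
generated by its unary part, which therefore determines it and detects inclusions.
As `F = ∏ F_{pᵢ}`, the unary part is the product of its components; a family `V` of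
`F_{pᵢ}[K^×]`-submodules is the unary part of the clonoid of all functions whose
restrictions along linear maps `K → Kⁿ` have components in `V`.
-/

open Finset Matrix

namespace LinearlyClosedClonoid

open Classical in
/-- The Iverson bracket. -/
noncomputable def χ (P : Prop) : ℤ := if P then 1 else 0

lemma χ_pos {P : Prop} (h : P) : χ P = 1 := if_pos h

lemma χ_neg {P : Prop} (h : ¬P) : χ P = 0 := if_neg h

lemma sum_χ_eq_mul {α : Type*} [Fintype α] (t : α) (F : α → ℤ) :
    ∑ s, χ (s = t) * F s = F t := by
  rw [sum_eq_single t (fun s _ hs => by rw [χ_neg hs, zero_mul]) (by simp), χ_pos rfl, one_mul]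

lemma sum_χ_eq {α : Type*} [Fintype α] (t : α) : ∑ s, χ (s = t) = 1 := by
  simpa using sum_χ_eq_mul t 1

lemma prod_χ {ι : Type*} [Fintype ι] (P : ι → Prop) : ∏ i, χ (P i) = χ (∀ i, P i) := by
  by_cases h : ∀ i, P i
  · rw [χ_pos h]
    exact prod_eq_one fun i _ => χ_pos (h i)
  · obtain ⟨i, hi⟩ := not_forall.mp h
    rw [χ_neg h]
    exact prod_eq_zero (mem_univ i) (χ_neg hi)

section Kernel

/-- The identity `∑ y, w y • f (φ y x) = c • f x` for all `f` (see `sum_zsmul`), stated on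
indicator functions. -/
def IsReproducingKernel {X Y : Type*} [Fintype Y] (w : Y → ℤ) (φ : Y → X → X) (c : ℤ) : Prop :=
  ∀ x z, ∑ y, w y * χ (φ y x = z) = c * χ (x = z)

variable {X Y : Type*} [Fintype X] [Fintype Y] {w : Y → ℤ} {φ : Y → X → X} {c : ℤ}

lemma IsReproducingKernel.sum_zsmul (h : IsReproducingKernel w φ c) {M : Type*}
    [AddCommGroup M] (f : X → M) (x : X) : ∑ y, w y • f (φ y x) = c • f x := by
  have hf : ∀ x', f x' = ∑ z, χ (x' = z) • f z := fun x' => by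
    rw [sum_eq_single x' (fun z _ hz => by rw [χ_neg (Ne.symm hz), zero_smul]) (by simp),
      χ_pos rfl, one_smul]
  calc ∑ y, w y • f (φ y x) = ∑ y, ∑ z, (w y * χ (φ y x = z)) • f z := by
        simp only [mul_smul, ← smul_sum, ← hf]
    _ = ∑ z, (c * χ (x = z)) • f z := by
        rw [sum_comm]
        simp only [← sum_smul, h x]
    _ = c • f x := by simp only [mul_smul, ← smul_sum, ← hf]

lemma IsReproducingKernel.pi {ι : Type*} [Fintype ι] [DecidableEq ι] {X Y : ι → Type*}
    [∀ i, Fintype (Y i)] {w : ∀ i, Y i → ℤ} {φ : ∀ i, Y i → X i → X i} {c : ι → ℤ}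
    (h : ∀ i, IsReproducingKernel (w i) (φ i) (c i)) :
    IsReproducingKernel (fun y : ∀ i, Y i => ∏ i, w i (y i)) (fun y x i => φ i (y i) (x i))
      (∏ i, c i) := by
  intro x z
  calc ∑ y : ∀ i, Y i, (∏ i, w i (y i)) * χ ((fun i => φ i (y i) (x i)) = z)
      = ∑ y : ∀ i, Y i, ∏ i, w i (y i) * χ (φ i (y i) (x i) = z i) := by
        simp only [prod_mul_distrib, prod_χ, ← funext_iff]
    _ = ∏ i, ∑ y, w i y * χ (φ i y (x i) = z i) :=
        (Fintype.prod_sum fun i y => w i y * χ (φ i y (x i) = z i)).symm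
    _ = (∏ i, c i) * χ (x = z) := by
        simp only [h _ (x _) (z _), prod_mul_distrib, prod_χ, ← funext_iff]

end Kernel

section Field

variable {k : Type*} [Field k] {ι : Type*}

def IsLineRep (d : ι → k) : Prop := d ∈ Set.range (Projectivization.rep (K := k) (V := ι → k))

lemma IsLineRep.ne_zero {d : ι → k} (hd : IsLineRep d) : d ≠ 0 := by
  obtain ⟨p, rfl⟩ := hd
  exact p.rep_nonzero

lemma existsUnique_isLineRep_eq_smul {x : ι → k} (hx : x ≠ 0) :
    ∃! d, IsLineRep d ∧ ∃ c : k, x = c • d := by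
  refine ⟨(Projectivization.mk k x hx).rep, ⟨⟨_, rfl⟩, ?_⟩, ?_⟩
  · obtain ⟨a, ha⟩ := Projectivization.exists_smul_eq_mk_rep k x hx
    exact ⟨↑a⁻¹, by rw [← ha, Units.smul_def, smul_smul, ← Units.val_mul, inv_mul_cancel,
      Units.val_one, one_smul]⟩
  · rintro _ ⟨⟨p, rfl⟩, c, rfl⟩
    exact congrArg _
      (((Projectivization.mk_eq_mk_iff' k _ _ hx p.rep_nonzero).mpr ⟨c, rfl⟩).trans p.mk_rep).symm

variable [Fintype ι] [DecidableEq ι]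

lemma exists_dotProduct_eq_zero_and_eq_one {x d : ι → k} (hd : d ≠ 0)
    (hx : ∀ c : k, x ≠ c • d) : ∃ b : ι → k, b ⬝ᵥ x = 0 ∧ b ⬝ᵥ d = 1 := by
  have hd' : d ∉ k ∙ x := by
    intro hmem
    obtain ⟨c, rfl⟩ := Submodule.mem_span_singleton.mp hmem
    have hc : c ≠ 0 := by rintro rfl; exact hd (zero_smul k x)
    exact hx c⁻¹ (by rw [smul_smul, inv_mul_cancel₀ hc, one_smul])
  obtain ⟨f, hfd, hfx⟩ := Submodule.exists_dual_map_eq_bot_of_notMem hd' inferInstance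
  have hfx : f x = 0 := by
    simpa [Submodule.map_span] using hfx
  have hf : ∀ v, (fun i => f (Pi.single i 1)) ⬝ᵥ v = f v := fun v => by
    conv_rhs => rw [← univ_sum_single v, map_sum]
    refine sum_congr rfl fun i _ => ?_
    rw [mul_comm, ← smul_eq_mul, ← map_smul, ← Pi.single_smul', smul_eq_mul, mul_one]
  refine ⟨(f d)⁻¹ • fun i => f (Pi.single i 1), ?_, ?_⟩
  all_goals rw [smul_dotProduct, smul_eq_mul, hf]
  · rw [hfx, mul_zero]
  · exact inv_mul_cancel₀ hfd

variable [Fintype k]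

lemma card_mul_sum_eq_sum_sum_add_smul (b : ι → k) (F : (ι → k) → ℤ) :
    (Fintype.card k : ℤ) * ∑ a, F a = ∑ a, ∑ r : k, F (a + r • b) := by
  rw [sum_comm]
  calc (Fintype.card k : ℤ) * ∑ a, F a = ∑ _r : k, ∑ a, F a := by
        rw [sum_const, card_univ, nsmul_eq_mul]
    _ = ∑ r : k, ∑ a, F (a + r • b) :=
        sum_congr rfl fun r _ => (Equiv.sum_comp (Equiv.addRight (r • b)) F).symm

lemma sum_comp_dotProduct {x : ι → k} (hx : x ≠ 0) (h : k → ℤ) :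
    ∑ a, h (a ⬝ᵥ x) = (Fintype.card k : ℤ) ^ (Fintype.card ι - 1) * ∑ t, h t := by
  obtain ⟨J, hJ⟩ := Function.ne_iff.mp hx
  have hb : Pi.single J (x J)⁻¹ ⬝ᵥ x = 1 := by
    rw [single_dotProduct, inv_mul_cancel₀ hJ]
  have hq : (Fintype.card k : ℤ) ≠ 0 := by exact_mod_cast Fintype.card_ne_zero
  obtain ⟨N, hN⟩ := Nat.exists_eq_add_one.mpr (Fintype.card_pos_iff.mpr ⟨J⟩)
  refine mul_left_cancel₀ hq ?_
  calc (Fintype.card k : ℤ) * ∑ a, h (a ⬝ᵥ x)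
      = ∑ a : ι → k, ∑ r : k, h (a ⬝ᵥ x + r) := by
        rw [card_mul_sum_eq_sum_sum_add_smul (Pi.single J (x J)⁻¹)]
        simp only [add_dotProduct, smul_dotProduct, hb, smul_eq_mul, mul_one]
    _ = ∑ _a : ι → k, ∑ t, h t :=
        sum_congr rfl fun a _ => Equiv.sum_comp (Equiv.addLeft (a ⬝ᵥ x)) h
    _ = _ := by
        rw [sum_const, card_univ, Fintype.card_fun, nsmul_eq_mul, Nat.cast_pow, hN,
          Nat.add_sub_cancel, pow_succ', mul_assoc]

noncomputable def lineTest (t : k) : ℤ := χ (t = 1) - χ (t = 0)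

lemma sum_lineTest : ∑ t : k, lineTest t = 0 := by
  simp only [lineTest, sum_sub_distrib, sum_χ_eq, sub_self]

lemma sum_mul_comp_dotProduct_eq_zero {x d : ι → k} (hd : d ≠ 0) (hx : ∀ c : k, x ≠ c • d)
    {g : k → ℤ} (hg : ∑ t, g t = 0) (h : k → ℤ) :
    ∑ a : ι → k, g (a ⬝ᵥ d) * h (a ⬝ᵥ x) = 0 := by
  obtain ⟨b, hbx, hbd⟩ := exists_dotProduct_eq_zero_and_eq_one hd hx
  have hq : (Fintype.card k : ℤ) ≠ 0 := by exact_mod_cast Fintype.card_ne_zero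
  refine (mul_eq_zero.mp ?_).resolve_left hq
  rw [card_mul_sum_eq_sum_sum_add_smul b]
  simp only [add_dotProduct, smul_dotProduct, hbx, hbd, smul_eq_mul, mul_one, mul_zero, add_zero]
  refine sum_eq_zero fun a _ => ?_
  rw [← sum_mul, show ∑ r, g (a ⬝ᵥ d + r) = ∑ t, g t from Equiv.sum_comp (Equiv.addLeft _) g,
    hg, zero_mul]

lemma sum_lineTest_mul_comp_smul {d : ι → k} (hd : d ≠ 0) (c : k) (h : k → ℤ) :
    ∑ a : ι → k, lineTest (a ⬝ᵥ d) * h (a ⬝ᵥ c • d)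
      = (Fintype.card k : ℤ) ^ (Fintype.card ι - 1) * (h c - h 0) := by
  simp only [dotProduct_smul, smul_eq_mul]
  rw [sum_comp_dotProduct hd fun s => lineTest s * h (c * s)]
  simp only [lineTest, sub_mul, sum_sub_distrib, sum_χ_eq_mul, mul_one, mul_zero]

lemma sum_isLineRep_mul_sum_lineTest (x z : ι → k) :
    ∑ d : ι → k, χ (IsLineRep d) * ∑ a : ι → k, lineTest (a ⬝ᵥ d) * χ ((a ⬝ᵥ x) • d = z)
      = (Fintype.card k : ℤ) ^ (Fintype.card ι - 1) * (χ (x = z) - χ (0 = z)) := by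
  set W := (Fintype.card k : ℤ) ^ (Fintype.card ι - 1) * (χ (x = z) - χ (0 = z))
  have hterm : ∀ d : ι → k,
      χ (IsLineRep d) * ∑ a : ι → k, lineTest (a ⬝ᵥ d) * χ ((a ⬝ᵥ x) • d = z)
        = χ (IsLineRep d ∧ ∃ c : k, x = c • d) * W := by
    intro d
    by_cases hd : IsLineRep d
    swap
    · rw [χ_neg hd, χ_neg fun h => hd h.1, zero_mul, zero_mul]
    rw [χ_pos hd, one_mul]
    by_cases hx : ∃ c : k, x = c • d
    · obtain ⟨c, rfl⟩ := hx
      rw [χ_pos ⟨hd, c, rfl⟩, one_mul,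
        sum_lineTest_mul_comp_smul hd.ne_zero c fun t => χ (t • d = z), zero_smul]
    · rw [χ_neg fun h => hx h.2, zero_mul]
      exact sum_mul_comp_dotProduct_eq_zero hd.ne_zero (not_exists.mp hx) sum_lineTest
        fun t => χ (t • d = z)
  rw [sum_congr rfl fun d _ => hterm d, ← sum_mul]
  by_cases hx : x = 0
  · simp [W, hx]
  · obtain ⟨d, hd, huniq⟩ := existsUnique_isLineRep_eq_smul hx
    rw [sum_eq_single d (fun d' _ hd' => χ_neg fun h => hd' (huniq d' h)) (by simp), χ_pos hd,
      one_mul]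

/-- The weight of the rank-one map `x ↦ (p.1 ⬝ᵥ x) • p.2`. -/
noncomputable def rankOneWeight (p : (ι → k) × (ι → k)) : ℤ :=
  χ (p = 0) * (Fintype.card k : ℤ) ^ (Fintype.card ι - 1) +
    χ (IsLineRep p.2) * lineTest (p.1 ⬝ᵥ p.2)

theorem isReproducingKernel_rankOneWeight :
    IsReproducingKernel (rankOneWeight (k := k) (ι := ι)) (fun p x => (p.1 ⬝ᵥ x) • p.2)
      ((Fintype.card k : ℤ) ^ (Fintype.card ι - 1)) := by
  intro x z
  simp only [rankOneWeight, add_mul, sum_add_distrib]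
  rw [sum_eq_single 0 (fun p _ hp => by rw [χ_neg hp, zero_mul, zero_mul]) (by simp),
    χ_pos rfl, Fintype.sum_prod_type, sum_comm]
  simp only [mul_assoc, ← mul_sum, sum_isLineRep_mul_sum_lineTest, Prod.snd_zero, smul_zero]
  ring

end Field

end LinearlyClosedClonoid

open LinearlyClosedClonoid

section Clonoid

variable {m : ℕ} {K : Fin m → Type*} [∀ i, Field (K i)] {F : Type*} [CommRing F]
  {C D : ∀ n : ℕ, Set ((∀ i, Fin n → K i) → F)}

def submoduleOfLinearCombClosed {α : Type*} (V : Set (α → F)) (hne : V.Nonempty)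
    (hV : ∀ (a b : F) (f g : α → F), f ∈ V → g ∈ V → (fun x => a * f x + b * g x) ∈ V) :
    Submodule F (α → F) where
  carrier := V
  zero_mem' := by
    obtain ⟨f, hf⟩ := hne
    simpa [Pi.zero_def] using hV 0 0 f f hf hf
  add_mem' {f g} hf hg := by simpa [Pi.add_def] using hV 1 1 f g hf hg
  smul_mem' c f hf := by simpa [Pi.smul_def] using hV c 0 f f hf hf

lemma IsLCC.nonempty (hC : IsLCC K F C) (n : ℕ) : (C n).Nonempty := by
  obtain ⟨l, f, hf⟩ := hC.1
  exact ⟨_, hC.2.2 l n f hf 0⟩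

lemma IsLCC.sum_mul_mem (hC : IsLCC K F C) {n : ℕ} {ι : Type*} (t : Finset ι) (c : ι → F)
    {g : ι → (∀ i, Fin n → K i) → F} (hg : ∀ j ∈ t, g j ∈ C n) :
    (fun x => ∑ j ∈ t, c j * g j x) ∈ C n := by
  have hsum : ∑ j ∈ t, c j • g j ∈ submoduleOfLinearCombClosed (C n) (hC.nonempty n) (hC.2.1 n) :=
    Submodule.sum_mem _ fun j hj => Submodule.smul_mem _ (c j) (hg j hj)
  have hfun : (fun x => ∑ j ∈ t, c j * g j x) = ∑ j ∈ t, c j • g j := by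
    ext x
    simp [Finset.sum_apply]
  rw [hfun]
  exact hsum

lemma IsLCC.comp_rankOne_mem (hC : IsLCC K F C) (hD : IsLCC K F D) (h1 : C 1 ⊆ D 1) {n : ℕ}
    {f : (∀ i, Fin n → K i) → F} (hf : f ∈ C n) (a d : ∀ i, Fin n → K i) :
    (fun x => f fun i => (a i ⬝ᵥ x i) • d i) ∈ D n := by
  have hcol := hC.2.2 n 1 f hf fun i => replicateCol (Fin 1) (d i)
  convert hD.2.2 1 n _ (h1 hcol) fun i => replicateRow (Fin 1) (a i) using 4 with x i j
  simp only [replicateRow_mulVec_eq_const]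
  ext j
  simp [mulVec, dotProduct, replicateCol, mul_comm]

variable [∀ i, Fintype (K i)]

theorem IsLCC.subset_of_subset_one (hK : IsUnit ((∏ i, Fintype.card (K i) : ℕ) : F))
    (hC : IsLCC K F C) (hD : IsLCC K F D) (h1 : C 1 ⊆ D 1) (n : ℕ) : C n ⊆ D n := by
  intro f hf
  set Q : ℤ := ∏ i, (Fintype.card (K i) : ℤ) ^ (Fintype.card (Fin n) - 1)
  have hQ : IsUnit (Q : F) := by simpa [Q, prod_pow] using hK.pow (n - 1)
  have hrec : ∀ x, ∑ y : (∀ i, (Fin n → K i) × (Fin n → K i)),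
      ((∏ i, rankOneWeight (y i) : ℤ) : F) * f (fun i => ((y i).1 ⬝ᵥ x i) • (y i).2) = Q * f x :=
    fun x => by
      simpa only [zsmul_eq_mul] using (IsReproducingKernel.pi fun i =>
        isReproducingKernel_rankOneWeight (k := K i) (ι := Fin n)).sum_zsmul f x
  convert hD.sum_mul_mem univ (fun y : ∀ i, (Fin n → K i) × (Fin n → K i) =>
      ↑hQ.unit⁻¹ * ((∏ i, rankOneWeight (y i) : ℤ) : F))
    fun y _ => hC.comp_rankOne_mem hD h1 hf (fun i => (y i).1) (fun i => (y i).2) using 1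
  funext x
  simp only [mul_assoc]
  rw [← mul_sum, hrec, ← mul_assoc, IsUnit.val_inv_mul, one_mul]

end Clonoid

lemma isUnit_natCast_of_coprime_card {R : Type*} [CommRing R] [Fintype R] {N : ℕ}
    (h : N.Coprime (Fintype.card R)) : IsUnit (N : R) := by
  obtain ⟨u, v, huv⟩ := Nat.isCoprime_iff_coprime.mpr h
  refine IsUnit.of_mul_eq_one (u : R) ?_
  have hcast := congrArg (Int.cast : ℤ → R) huv
  push_cast [Nat.cast_card_eq_zero] at hcast
  linear_combination hcast

lemma mulVec_fin_one {R : Type*} [NonUnitalNonAssocSemiring R] (B : Matrix (Fin 1) (Fin 1) R)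
    (v : Fin 1 → R) : B *ᵥ v = fun j => B 0 0 * v j := by
  funext j
  fin_cases j
  simp [mulVec, dotProduct]

lemma IsSubmoduleKx.comp_mulVec_mem {m : ℕ} {K : Fin m → Type*} [∀ i, Field (K i)] {E : Type*}
    [Field E] {W : Set ((∀ j, Fin 1 → K j) → E)} (hW : IsSubmoduleKx K E W)
    {v : (∀ j, Fin 1 → K j) → E} (hv : v ∈ W) (B : ∀ j, Matrix (Fin 1) (Fin 1) (K j)) :
    (fun y => v fun j => B j *ᵥ y j) ∈ W := by
  simpa only [mulVec_fin_one] using hW.2.2 v hv fun j => B j 0 0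

section Components

variable {m : ℕ} {K : Fin m → Type*} [∀ i, Field (K i)] {ι : Type*} {Fp : ι → Type*}
  [∀ i, Field (Fp i)] {V : ∀ i, Set ((∀ j, Fin 1 → K j) → Fp i)}

def unaryComponent (C : ∀ n : ℕ, Set ((∀ j, Fin n → K j) → ∀ i, Fp i)) (i : ι) :
    Set ((∀ j, Fin 1 → K j) → Fp i) :=
  {f | ∃ g ∈ C 1, f = fun x => g x i}

def clonoidOfComponents (V : ∀ i, Set ((∀ j, Fin 1 → K j) → Fp i)) (n : ℕ) :
    Set ((∀ j, Fin n → K j) → ∀ i, Fp i) :=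
  {f | ∀ (B : ∀ j, Matrix (Fin n) (Fin 1) (K j)) i, (fun y => f (fun j => B j *ᵥ y j) i) ∈ V i}

lemma isLCC_clonoidOfComponents (hV : ∀ i, IsSubmoduleKx K (Fp i) (V i)) :
    IsLCC K (∀ i, Fp i) (clonoidOfComponents V) := by
  refine ⟨⟨0, 0, fun B i => ?_⟩, fun n a b f g hf hg B i => ?_, fun n l f hf A B i => ?_⟩
  · obtain ⟨v, hv⟩ := (hV i).1
    simpa using (hV i).2.1 0 0 v v hv hv
  · exact (hV i).2.1 (a i) (b i) _ _ (hf B i) (hg B i)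
  · simpa only [mulVec_mulVec] using hf (fun j => A j * B j) i

variable [DecidableEq ι] {C D : ∀ n : ℕ, Set ((∀ j, Fin n → K j) → ∀ i, Fp i)}

lemma IsLCC.isSubmoduleKx_unaryComponent (hC : IsLCC K (∀ i, Fp i) C) (i : ι) :
    IsSubmoduleKx K (Fp i) (unaryComponent C i) := by
  refine ⟨?_, ?_, ?_⟩
  · obtain ⟨g, hg⟩ := hC.nonempty 1
    exact ⟨_, g, hg, rfl⟩
  · rintro a b _ _ ⟨f, hf, rfl⟩ ⟨g, hg, rfl⟩
    exact ⟨_, hC.2.1 1 (Pi.single i a) (Pi.single i b) f g hf hg, by simp⟩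
  · rintro _ ⟨g, hg, rfl⟩ c
    refine ⟨_, hC.2.2 1 1 g hg fun j => Matrix.of fun _ _ => c j, ?_⟩
    simp only [mulVec_fin_one, of_apply]

lemma IsLCC.mem_one_of_forall_mem_unaryComponent [Fintype ι] (hD : IsLCC K (∀ i, Fp i) D)
    {g : (∀ j, Fin 1 → K j) → ∀ i, Fp i} (hg : ∀ i, (fun x => g x i) ∈ unaryComponent D i) :
    g ∈ D 1 := by
  choose h hh hgh using hg
  convert hD.sum_mul_mem univ (fun i => Pi.single i 1) fun i _ => hh i using 1
  funext x i
  rw [congrFun (hgh i) x, Finset.sum_apply, sum_eq_single i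
    (fun j _ hj => by rw [Pi.mul_apply, Pi.single_eq_of_ne' hj, zero_mul]) (by simp),
    Pi.mul_apply, Pi.single_eq_same, one_mul]

theorem IsLCC.forall_subset_iff [Fintype ι] [∀ i, Fintype (K i)]
    (hK : ∀ i, IsUnit ((∏ j, Fintype.card (K j) : ℕ) : Fp i))
    (hC : IsLCC K (∀ i, Fp i) C) (hD : IsLCC K (∀ i, Fp i) D) :
    (∀ n, C n ⊆ D n) ↔ ∀ i, unaryComponent C i ⊆ unaryComponent D i := by
  refine ⟨fun h i _ ⟨g, hg, hf⟩ => ⟨g, h 1 hg, hf⟩, fun h => ?_⟩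
  refine hC.subset_of_subset_one (Pi.isUnit_iff.mpr hK) hD fun g hg => ?_
  exact hD.mem_one_of_forall_mem_unaryComponent fun i => h i ⟨g, hg, rfl⟩

lemma unaryComponent_clonoidOfComponents (hV : ∀ i, IsSubmoduleKx K (Fp i) (V i)) (i : ι) :
    unaryComponent (clonoidOfComponents V) i = V i := by
  ext f
  constructor
  · rintro ⟨g, hg, rfl⟩
    simpa using hg (fun _ => 1) i
  · intro hf
    choose w hw using fun j => (hV j).1
    refine ⟨fun x => Function.update (fun j => w j x) i (f x), fun B j => ?_, by simp⟩
    rcases eq_or_ne j i with rfl | hj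
    · simpa using (hV j).comp_mulVec_mem hf B
    · simpa [Function.update_of_ne hj] using (hV j).comp_mulVec_mem (hw j) B

end Components

/-- for `|K|` coprime to `|F|`, the map sending an `(F, K)`-linearly
closed clonoid to (the components of) its unary part is a lattice isomorphism onto the
direct product of the lattices of `F_{pᵢ}[K^×]`-submodules of `F_{pᵢ}^K`. -/
theorem lcc_lattice_iso_submodules
    {m s : ℕ} (K : Fin m → Type*) [∀ i, Field (K i)] [∀ i, Fintype (K i)]
    (Fp : Fin s → Type*) [∀ i, Field (Fp i)] [∀ i, Fintype (Fp i)]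
    (hcop : Nat.Coprime (∏ i, Fintype.card (K i)) (∏ i, Fintype.card (Fp i))) :
    letI pi1 : (∀ n : ℕ, Set ((∀ i, Fin n → K i) → (∀ i, Fp i))) → ∀ i : Fin s,
        Set ((∀ i, Fin 1 → K i) → Fp i) :=
      fun C i => {f | ∃ g ∈ C 1, f = fun x => g x i}
    (∀ C, IsLCC K (∀ i, Fp i) C → ∀ i, IsSubmoduleKx K (Fp i) (pi1 C i)) ∧
    (∀ C D, IsLCC K (∀ i, Fp i) C → IsLCC K (∀ i, Fp i) D →
      (∀ i, pi1 C i = pi1 D i) → C = D) ∧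
    (∀ V : ∀ i : Fin s, Set ((∀ i, Fin 1 → K i) → Fp i),
      (∀ i, IsSubmoduleKx K (Fp i) (V i)) →
      ∃ C, IsLCC K (∀ i, Fp i) C ∧ ∀ i, pi1 C i = V i) ∧
    (∀ C D, IsLCC K (∀ i, Fp i) C → IsLCC K (∀ i, Fp i) D →
      ((∀ n, C n ⊆ D n) ↔ ∀ i, pi1 C i ⊆ pi1 D i)) := by
  have hK : ∀ i, IsUnit ((∏ j, Fintype.card (K j) : ℕ) : Fp i) := fun i =>
    isUnit_natCast_of_coprime_card <|
      hcop.coprime_dvd_right (dvd_prod_of_mem (fun j => Fintype.card (Fp j)) (mem_univ i))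
  refine ⟨fun C hC i => hC.isSubmoduleKx_unaryComponent i, fun C D hC hD h => ?_,
    fun V hV => ⟨clonoidOfComponents V, isLCC_clonoidOfComponents hV,
      unaryComponent_clonoidOfComponents hV⟩,
    fun C D hC hD => hC.forall_subset_iff hK hD⟩
  funext n
  exact ((hC.forall_subset_iff hK hD).2 (fun i => (h i).subset) n).antisymm
    ((hD.forall_subset_iff hK hC).2 (fun i => (h i).symm.subset) n)
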